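/- arXiv:1604.06749 — 3 statements merged into one kernel-verified Lean document; each statement's English description precedes it below -/
import Mathlib

section
/- Let T be a tree on p vertices, let T_CL be the Chow-Liu tree built from n samples, and suppose there exist edges f=(w,w̃) and g=(u,ũ) such that f ∈ E_T, f ∉ E_{T_CL}, g ∈ E_{T_CL}, g ∉ E_T, f ∈ path_T(u,ũ), and g ∈ path_{T_CL}(w,w̃). Then (∑_{i=1}^n Z^{(i)}_{f,u,ũ})·(∑_{i=1}^n Y^{(i)}_{f,u,ũ}) ≤ 0, where Z_{f,u,ũ} = X_w X_{w̃} − X_u X_{ũ} and Y_{f,u,ũ} = X_w X_{w̃} + X_u X_{ũ} evaluated on each sample. -/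
open Finset
open scoped Classical

noncomputable section

/-- A spin configuration on `p` vertices; `true ↦ +1`, `false ↦ -1`. -/
abbrev Conf (p : ℕ) := Fin p → Bool

/-- The real spin value of a Boolean variable. -/
def spin (b : Bool) : ℝ := if b then 1 else -1

/-- `P` is a probability distribution on `Conf p`. -/
def IsDist {p : ℕ} (P : Conf p → ℝ) : Prop :=
  (∀ x, 0 ≤ P x) ∧ ∑ x : Conf p, P x = 1

/-- Pairwise correlation `μ_{ij} = E_P[X_i X_j]`. -/
def corr {p : ℕ} (P : Conf p → ℝ) (i j : Fin p) : ℝ :=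
  ∑ x : Conf p, P x * spin (x i) * spin (x j)

/-- The Ising energy `∑_{(i,j) ∈ E} θ_{ij} x_i x_j` (each edge counted once, via `i < j`). -/
def energy {p : ℕ} (G : SimpleGraph (Fin p)) (θ : Fin p → Fin p → ℝ) (x : Conf p) : ℝ :=
  ∑ i : Fin p, ∑ j : Fin p, if G.Adj i j ∧ i < j then θ i j * spin (x i) * spin (x j) else 0

/-- The zero-field Ising model on graph `G` with parameters `θ`:
`P(x) = exp(∑_{(i,j)∈E} θ_{ij} x_i x_j - Φ(θ))`. -/
def ising {p : ℕ} (G : SimpleGraph (Fin p)) (θ : Fin p → Fin p → ℝ) : Conf p → ℝ :=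
  fun x => Real.exp (energy G θ x) / ∑ y : Conf p, Real.exp (energy G θ y)

/-- `P ∈ 𝒫_G(α, β)`: zero-field Ising model on `G` with `α ≤ |θ_{ij}| ≤ β` on edges. -/
def MemIsing {p : ℕ} (G : SimpleGraph (Fin p)) (α β : ℝ) (P : Conf p → ℝ) : Prop :=
  ∃ θ : Fin p → Fin p → ℝ, (∀ i j, θ i j = θ j i) ∧
    (∀ i j, G.Adj i j → α ≤ |θ i j| ∧ |θ i j| ≤ β) ∧ P = ising G θ

/-- `P ∈ 𝒫_G`: zero-field Ising model on `G`, no constraint on parameter strength. -/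
def MemIsingAll {p : ℕ} (G : SimpleGraph (Fin p)) (P : Conf p → ℝ) : Prop :=
  ∃ θ : Fin p → Fin p → ℝ, (∀ i j, θ i j = θ j i) ∧ P = ising G θ

/-- Marginal of `P` on the pair `(i, j)` evaluated at `(a, b)`. -/
def margPair {p : ℕ} (P : Conf p → ℝ) (i j : Fin p) (a b : Bool) : ℝ :=
  ∑ x : Conf p, if x i = a ∧ x j = b then P x else 0

/-- Total variation distance between the `(i,j)`-pairwise marginals of `P` and `Q`. -/
def tvPair {p : ℕ} (P Q : Conf p → ℝ) (i j : Fin p) : ℝ :=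
  (1/2) * ∑ a : Bool, ∑ b : Bool, |margPair P i j a b - margPair Q i j a b|

/-- The small-set TV loss `L^(2)(P,Q)`: sup over two-element subsets of vertices of the TV
distance between the corresponding marginals. -/
def L2 {p : ℕ} (P Q : Conf p → ℝ) : ℝ :=
  ⨆ i : Fin p, ⨆ j : Fin p, ⨆ _ : i ≠ j, tvPair P Q i j

/-- Probability, under `n` i.i.d. samples from `P`, of the event `E`. -/
def Pr {p n : ℕ} (P : Conf p → ℝ) (E : (Fin n → Conf p) → Prop) : ℝ :=
  ∑ xs : Fin n → Conf p, if E xs then ∏ l : Fin n, P (xs l) else 0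

/-- The empirical distribution of the samples `xs`. -/
def empDist {p n : ℕ} (xs : Fin n → Conf p) : Conf p → ℝ :=
  fun x => ((Finset.univ.filter fun l => xs l = x).card : ℝ) / n

/-- Total weight of the edges of `G` under the weight function `w`. -/
def graphWeight {p : ℕ} (G : SimpleGraph (Fin p)) (w : Fin p → Fin p → ℝ) : ℝ :=
  ∑ i : Fin p, ∑ j : Fin p, if G.Adj i j ∧ i < j then w i j else 0

/-- `G` is a maximum-weight spanning tree for the weights `w` on the complete graph. -/
def IsMaxSpanningTree {p : ℕ} (w : Fin p → Fin p → ℝ) (G : SimpleGraph (Fin p)) : Prop :=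
  G.IsTree ∧ ∀ G' : SimpleGraph (Fin p), G'.IsTree → graphWeight G' w ≤ graphWeight G w

/-- `G` is a Chow–Liu tree for the samples `xs`: a maximum-weight spanning tree for the
weights `|μ̂_{ij}|` given by empirical correlations. -/
def IsChowLiu {p n : ℕ} (xs : Fin n → Conf p) (G : SimpleGraph (Fin p)) : Prop :=
  IsMaxSpanningTree (fun i j => |corr (empDist xs) i j|) G

/-- The reverse I-projection `Π_G(P)` of `P` onto zero-field Ising models on the tree
(or forest) `G`: the product-form distribution with uniform singleton marginals matching the
pairwise correlations of `P` across the edges of `G`. -/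
def proj {p : ℕ} (G : SimpleGraph (Fin p)) (P : Conf p → ℝ) : Conf p → ℝ :=
  fun x => ((1:ℝ)/2)^p *
    ∏ i : Fin p, ∏ j : Fin p,
      if G.Adj i j ∧ i < j then 1 + corr P i j * spin (x i) * spin (x j) else 1

/-- The edge `(a,b)` of `G` lies on the (unique, when `G` is a tree) path in `G` between
`u` and `v`: it is an edge whose removal disconnects `u` from `v`. -/
def onPath {p : ℕ} (G : SimpleGraph (Fin p)) (u v a b : Fin p) : Prop :=
  G.Adj a b ∧ ¬ (G.deleteEdges {s(a, b)}).Reachable u v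

/-- Product of `f` over the edges on the path in `G` between `u` and `v`. -/
def pathProd {p : ℕ} (G : SimpleGraph (Fin p)) (f : Fin p → Fin p → ℝ) (u v : Fin p) : ℝ :=
  ∏ i : Fin p, ∏ j : Fin p, if onPath G u v i j ∧ i < j then f i j else 1

/-- Product of `f` over the edges on the path in `G` between `u` and `v`, excluding the
edge `(a,b)`. -/
def pathProdExcl {p : ℕ} (G : SimpleGraph (Fin p)) (f : Fin p → Fin p → ℝ)
    (u v a b : Fin p) : ℝ :=
  ∏ i : Fin p, ∏ j : Fin p,
    if onPath G u v i j ∧ i < j ∧ s(i, j) ≠ s(a, b) then f i j else 1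

/-- Inverse hyperbolic tangent. -/
def atanh (x : ℝ) : ℝ := (1/2) * Real.log ((1 + x) / (1 - x))

end

/-! The edge `g = (u, ũ)` lies on the `T_CL`-path between `w` and `w̃`, so removing `g` from
`T_CL` separates `w` from `w̃` and adding `f = (w, w̃)` yields another spanning tree.
Maximality of `T_CL` then gives `|μ̂_f| ≤ |μ̂_g|` (the cycle property). Since
`n μ̂_f = ∑ᵢ X_w X_w̃ =: A` and `n μ̂_g = ∑ᵢ X_u X_ũ =: B`, the product in question is
`A² - B² ≤ 0`. -/

open SimpleGraph

lemma SimpleGraph.Connected.reachable_deleteEdges_left_or_right {V : Type*} {G : SimpleGraph V}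
    (hG : G.Connected) (x y v : V) :
    (G.deleteEdges {s(x, y)}).Reachable v x ∨ (G.deleteEdges {s(x, y)}).Reachable v y := by
  obtain ⟨q⟩ := hG.preconnected v x
  induction q with
  | nil => exact .inl .rfl
  | @cons a b c hab _ ih =>
    by_cases he : s(a, b) = s(c, y)
    · rcases Sym2.eq_iff.1 he with ⟨rfl, -⟩ | ⟨rfl, -⟩
      exacts [.inl .rfl, .inr .rfl]
    · have hab' : (G.deleteEdges {s(c, y)}).Adj a b := by simpa [he] using hab
      exact ih.imp hab'.reachable.trans hab'.reachable.trans

lemma SimpleGraph.IsTree.deleteEdges_sup_edge {V : Type*} {T : SimpleGraph V} (hT : T.IsTree)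
    {w w' u u' : V} (h : ¬ (T.deleteEdges {s(u, u')}).Reachable w w') :
    (T.deleteEdges {s(u, u')} ⊔ edge w w').IsTree := by
  set H := T.deleteEdges {s(u, u')}
  have hle : H ≤ H ⊔ edge w w' := le_sup_left
  have hww' : (H ⊔ edge w w').Reachable w w' :=
    Adj.reachable (Or.inr (by simpa [edge_adj] using fun hw : w = w' => h (hw ▸ .rfl)))
  have hside := hT.connected.reachable_deleteEdges_left_or_right u u'
  have hu'u : (H ⊔ edge w w').Reachable u' u := by
    rcases hside w with hw | hw <;> rcases hside w' with hw' | hw'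
    · exact absurd (hw.trans hw'.symm) h
    · exact ((hw'.mono hle).symm.trans hww'.symm).trans (hw.mono hle)
    · exact ((hw.mono hle).symm.trans hww').trans (hw'.mono hle)
    · exact absurd (hw.trans hw'.symm) h
  refine ⟨(connected_iff_exists_forall_reachable _).2 ⟨u, fun v => ?_⟩,
    (hT.isAcyclic.anti (deleteEdges_le _)).sup_edge_of_not_reachable h⟩
  rcases hside v with hv | hv
  · exact (hv.mono hle).symm
  · exact hu'u.symm.trans (hv.mono hle).symm

lemma graphWeight_eq_sum_edgeFinset {p : ℕ} (G : SimpleGraph (Fin p)) [Fintype G.edgeSet]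
    (wt : Fin p → Fin p → ℝ) :
    graphWeight G wt = ∑ e ∈ G.edgeFinset, wt e.inf e.sup := by
  rw [graphWeight, ← sum_product', ← sum_filter]
  refine sum_nbij' (fun x => s(x.1, x.2)) (fun e => (e.inf, e.sup)) ?_ ?_ ?_ ?_ ?_
  · rintro ⟨a, b⟩ hab
    simp_all
  · intro e he
    induction e with | _ a b
    have hab : G.Adj a b := by simpa using he
    rcases lt_or_gt_of_ne hab.ne with h | h
    · simp [h.le, h, hab]
    · simp [h.le, h, hab.symm]
  · rintro ⟨a, b⟩ hab
    simp_all [le_of_lt]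
  · intro e _
    exact Sym2.inf_eq_inf_and_sup_eq_sup.1 (by simp [e.inf_le_sup])
  · rintro ⟨a, b⟩ hab
    simp_all [le_of_lt]

lemma IsMaxSpanningTree.le_of_onPath {p : ℕ} {wt : Fin p → Fin p → ℝ}
    (hwt : ∀ i j, wt i j = wt j i) {T : SimpleGraph (Fin p)} (hT : IsMaxSpanningTree wt T)
    {w w' u u' : Fin p} (h : onPath T w w' u u') : wt w w' ≤ wt u u' := by
  have hne : w ≠ w' := fun hw => h.2 (hw ▸ .rfl)
  have hmem : s(u, u') ∈ T.edgeFinset := by simpa using h.1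
  have hnotin : s(w, w') ∉ T.edgeFinset.erase s(u, u') := fun hf => h.2 <| Adj.reachable <|
    (deleteEdges_adj ..).2 ⟨mem_edgeFinset.1 (mem_erase.1 hf).2, (mem_erase.1 hf).1⟩
  have hedges : (T.deleteEdges {s(u, u')} ⊔ edge w w').edgeFinset =
      cons s(w, w') (T.edgeFinset.erase s(u, u')) hnotin := by
    ext e
    simp [edgeSet_edge_of_ne hne, or_comm, and_comm]
  have hwt' : ∀ a b, wt s(a, b).inf s(a, b).sup = wt a b := fun a b => by
    rcases le_total a b with hab | hab <;> simp [hab, hwt b a]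
  have hexch := hT.2 _ (hT.1.deleteEdges_sup_edge h.2)
  rw [graphWeight_eq_sum_edgeFinset, graphWeight_eq_sum_edgeFinset, hedges, sum_cons,
    sum_erase_eq_sub hmem, hwt', hwt'] at hexch
  linarith

lemma corr_symm {p : ℕ} (P : Conf p → ℝ) (i j : Fin p) : corr P i j = corr P j i :=
  sum_congr rfl fun _ _ => by ring

lemma corr_empDist {p n : ℕ} (xs : Fin n → Conf p) (i j : Fin p) :
    corr (empDist xs) i j = (∑ l, spin (xs l i) * spin (xs l j)) / n := by
  rw [← sum_fiberwise' univ xs fun x => spin (x i) * spin (x j), sum_div]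
  refine sum_congr rfl fun x _ => ?_
  rw [sum_const, nsmul_eq_mul, empDist]
  ring

theorem ZY_product_nonpos_general
    (p n : ℕ) (T : SimpleGraph (Fin p)) (xs : Fin n → Conf p)
    (hCL : IsChowLiu xs T)
    (w w' u u' : Fin p)
    (hgp : onPath T w w' u u') :
    (∑ i : Fin n, (spin (xs i w) * spin (xs i w') - spin (xs i u) * spin (xs i u'))) *
    (∑ i : Fin n, (spin (xs i w) * spin (xs i w') + spin (xs i u) * spin (xs i u')))
      ≤ 0 := by
  have hcorr := IsMaxSpanningTree.le_of_onPath (fun i j => by rw [corr_symm]) hCL hgp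
  set A := ∑ l, spin (xs l w) * spin (xs l w')
  set B := ∑ l, spin (xs l u) * spin (xs l u')
  have hAB : |A| ≤ |B| := by
    rcases n.eq_zero_or_pos with rfl | hn
    · simp [A, B]
    rwa [corr_empDist, corr_empDist, abs_div, abs_div,
      div_le_div_iff_of_pos_right (by positivity)] at hcorr
  rw [sum_sub_distrib, sum_add_distrib]
  nlinarith [sq_le_sq.2 hAB]

/-- Sign of the product of the `Z` and `Y` statistics at an error.
Let `T` be a tree on `p` vertices and `T_CL` a Chow–Liu tree built from `n` samples.
Suppose `f = (w,w̃) ∈ E_T \ E_{T_CL}` and `g = (u,ũ) ∈ E_{T_CL} \ E_T` with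
`f ∈ path_T(u,ũ)` and `g ∈ path_{T_CL}(w,w̃)`. Then
`(∑_i Z⁽ⁱ⁾_{f,u,ũ})·(∑_i Y⁽ⁱ⁾_{f,u,ũ}) ≤ 0`. -/
theorem ZY_product_nonpos
    (p n : ℕ) (G T : SimpleGraph (Fin p)) (xs : Fin n → Conf p)
    (hG : G.IsTree) (hCL : IsChowLiu xs T)
    (w w' u u' : Fin p)
    (hf : G.Adj w w') (hfn : ¬ T.Adj w w')
    (hg : T.Adj u u') (hgn : ¬ G.Adj u u')
    (hfp : onPath G u u' w w') (hgp : onPath T w w' u u') :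
    (∑ i : Fin n, (spin (xs i w) * spin (xs i w') - spin (xs i u) * spin (xs i u'))) *
    (∑ i : Fin n, (spin (xs i w) * spin (xs i w') + spin (xs i u) * spin (xs i u')))
      ≤ 0 :=
  ZY_product_nonpos_general p n T xs hCL w w' u u' hgp
end

section
/- Let T and T̂ be two spanning trees on the same vertex set V, and let w, w̃ ∈ V be such that path_T(w,w̃) ≠ path_{T̂}(w,w̃). Then there exist edges f = (u,ũ) ∈ path_T(w,w̃) and g = (v,ṽ) ∈ path_{T̂}(w,w̃) such that: (i) f ∉ path_{T̂}(w,w̃) and g ∉ path_T(w,w̃); (ii) f ∈ path_T(v,ṽ) and g ∈ path_{T̂}(u,ũ). -/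
open Finset
open scoped Classical

/-!
Let `P`, `Q` be the `w`–`w'` paths in `G`, `G'`. Deleting the `i`-th edge `P i` of `P` from the
tree `G` leaves a side containing `w` but not `w'`; let `φ i` be the step at which `Q` first leaves
it, and symmetrically let `ψ j` be the step at which `P` first leaves the side of `Q j` in `G'`.
If `P i ∉ G'`, then `Q (φ i)` is an edge crossing the cut of `P i` in `G` other than `P i`, so
`Q (φ i) ∉ G`; symmetrically `Q j ∉ G` gives `P (ψ j) ∉ G'`. Along a path the sides grow, so `φ`
and `ψ` are monotone, and `ψ ∘ φ` is a monotone self-map of the finite nonempty set of indices `i`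
with `P i ∉ G'`. Such a map has a fixed point `i`, and `f = P i`, `g = Q (φ i)` are the two edges.
-/

theorem Finset.exists_isFixedPt_of_mapsTo_of_monotoneOn {α : Type*} [LinearOrder α]
    {s : Finset α} (hs : s.Nonempty) {f : α → α} (hmaps : Set.MapsTo f s s)
    (hf : MonotoneOn f s) : ∃ a ∈ s, Function.IsFixedPt f a := by
  set t := s.filter fun a => a ≤ f a
  have ht : t.Nonempty :=
    ⟨s.min' hs, mem_filter.2 ⟨s.min'_mem hs, s.min'_le _ (hmaps (s.min'_mem hs))⟩⟩
  -- the largest `a ∈ s` with `a ≤ f a` is fixed, since `f a` again satisfies `f a ≤ f (f a)`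
  obtain ⟨has, hle⟩ := mem_filter.1 (t.max'_mem ht)
  have hfa : f (t.max' ht) ∈ t := mem_filter.2 ⟨hmaps has, hf has (hmaps has) hle⟩
  exact ⟨t.max' ht, has, le_antisymm (t.le_max' _ hfa) hle⟩

namespace SimpleGraph

variable {V : Type*} {G H : SimpleGraph V} {u v w w' : V}

namespace Walk

-- `0` if `p` never leaves `S`
noncomputable def firstExit (p : G.Walk u v) (S : Set V) : ℕ :=
  sInf {i | p.getVert (i + 1) ∉ S}

variable (p : G.Walk u v) {S T : Set V}

lemma getVert_firstExit_mem (hu : u ∈ S) : p.getVert (p.firstExit S) ∈ S := by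
  rcases h : p.firstExit S with _ | i
  · simpa using hu
  · exact not_not.1 (Nat.notMem_of_lt_sInf (h ▸ i.lt_add_one))

lemma getVert_firstExit_succ_notMem (hv : v ∉ S) : p.getVert (p.firstExit S + 1) ∉ S :=
  Nat.sInf_mem (s := {i | p.getVert (i + 1) ∉ S})
    ⟨p.length, by rwa [Set.mem_ofPred_eq, p.getVert_of_length_le (by omega)]⟩

lemma firstExit_lt_length (hu : u ∈ S) (hv : v ∉ S) : p.firstExit S < p.length := by
  by_contra! h
  exact hv (p.getVert_of_length_le h ▸ p.getVert_firstExit_mem hu)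

lemma firstExit_mono (hST : S ⊆ T) (hv : v ∉ T) : p.firstExit S ≤ p.firstExit T :=
  Nat.sInf_le fun h => p.getVert_firstExit_succ_notMem hv (hST h)

lemma mk_getVert_mem_edges {i : ℕ} (hi : i < p.length) :
    s(p.getVert i, p.getVert (i + 1)) ∈ p.edges :=
  p.mk_mem_edges_iff_exists.2 ⟨i, hi, rfl⟩

end Walk

lemma IsAcyclic.eq_of_isPath (hG : G.IsAcyclic) {p q : G.Walk u v} (hp : p.IsPath)
    (hq : q.IsPath) : p = q :=
  congrArg Subtype.val ((hG.subsingleton_path u v).elim ⟨p, hp⟩ ⟨q, hq⟩)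

lemma IsAcyclic.reachable_deleteEdges_iff (hG : G.IsAcyclic) {p : G.Walk u v} (hp : p.IsPath)
    {e : Sym2 V} : (G.deleteEdges {e}).Reachable u v ↔ e ∉ p.edges := by
  refine ⟨fun ⟨q⟩ he => ?_, fun he => ?_⟩
  · have hq : (q.bypass.mapLe (G.deleteEdges_le {e})).IsPath := q.bypass_isPath.mapLe _
    rw [hG.eq_of_isPath hp hq, Walk.edges_mapLe_eq_edges] at he
    simpa using q.bypass.edges_subset_edgeSet he
  · by_contra h
    exact he (p.mem_edges_of_not_reachable_deleteEdges h)

lemma IsAcyclic.mk_getVert_mem_edges_of_getVert_mem_support (hG : G.IsAcyclic)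
    {p : G.Walk u v} (hp : p.IsPath) {z : V} {q : G.Walk u z} (hq : q.IsPath) {i n : ℕ}
    (hin : i < n) (hi : i < p.length) (hn : p.getVert n ∈ q.support) :
    s(p.getVert i, p.getVert (i + 1)) ∈ q.edges := by
  refine q.edges_takeUntil_subset_edges hn ?_
  rw [← hG.eq_of_isPath (hp.take n) (hq.takeUntil hn), Walk.mk_mem_edges_iff_exists]
  refine ⟨i, ?_, ?_⟩
  · rw [Walk.take_length]
    exact lt_min hin hi
  · rw [Walk.take_getVert, Walk.take_getVert, min_eq_right hin.le, min_eq_right hin]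

def cutSide (G : SimpleGraph V) (w : V) (e : Sym2 V) : Set V :=
  {z | (G.deleteEdges {e}).Reachable w z}

lemma start_mem_cutSide (e : Sym2 V) : w ∈ G.cutSide w e := Reachable.refl w

lemma IsAcyclic.notMem_cutSide (hG : G.IsAcyclic) {p : G.Walk w w'} (hp : p.IsPath)
    {e : Sym2 V} (he : e ∈ p.edges) : w' ∉ G.cutSide w e :=
  fun h => (hG.reachable_deleteEdges_iff hp).1 h he

lemma IsAcyclic.cutSide_mono (hG : G.IsAcyclic) {p : G.Walk w w'} (hp : p.IsPath) {i j : ℕ}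
    (hij : i ≤ j) (hj : j < p.length) :
    G.cutSide w s(p.getVert i, p.getVert (i + 1)) ⊆
      G.cutSide w s(p.getVert j, p.getVert (j + 1)) := by
  intro z hz
  by_contra hzj
  obtain ⟨q⟩ := hz.mono (G.deleteEdges_le _)
  have hjq := q.bypass.mem_edges_of_not_reachable_deleteEdges hzj
  have hiq := hG.mk_getVert_mem_edges_of_getVert_mem_support hp q.bypass_isPath
    (Nat.lt_succ_of_le hij) (hij.trans_lt hj) (q.bypass.snd_mem_support_of_mem_edges hjq)
  exact (hG.reachable_deleteEdges_iff q.bypass_isPath).1 hz hiq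

namespace Walk

noncomputable def offEdgeIndices (p : G.Walk u v) (H : SimpleGraph V) : Finset ℕ :=
  (range p.length).filter fun i => s(p.getVert i, p.getVert (i + 1)) ∉ H.edgeSet

lemma coe_offEdgeIndices_subset (p : G.Walk u v) :
    ↑(p.offEdgeIndices H) ⊆ Set.Iio p.length :=
  fun _ hi => mem_range.1 (mem_filter.1 hi).1

lemma edges_subset_edgeSet_of_offEdgeIndices_eq_empty {p : G.Walk u v}
    (hp : p.offEdgeIndices H = ∅) : ∀ e ∈ p.edges, e ∈ H.edgeSet := by
  intro e he
  induction e using Sym2.ind with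
  | _ a b =>
    obtain ⟨i, hi, hab⟩ := p.mk_mem_edges_iff_exists.1 he
    by_contra habH
    have : i ∈ p.offEdgeIndices H := mem_filter.2 ⟨mem_range.2 hi, hab ▸ habH⟩
    simp [hp] at this

noncomputable def firstCrossing (p : G.Walk w w') (q : H.Walk w w') (i : ℕ) : ℕ :=
  q.firstExit (G.cutSide w s(p.getVert i, p.getVert (i + 1)))

variable (p : G.Walk w w') (q : H.Walk w w') {i : ℕ}

lemma getVert_firstCrossing_mem :
    q.getVert (p.firstCrossing q i) ∈ G.cutSide w s(p.getVert i, p.getVert (i + 1)) :=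
  q.getVert_firstExit_mem (start_mem_cutSide _)

variable (hG : G.IsAcyclic) (hp : p.IsPath)
include hG hp

lemma getVert_firstCrossing_succ_notMem (hi : i < p.length) :
    q.getVert (p.firstCrossing q i + 1) ∉ G.cutSide w s(p.getVert i, p.getVert (i + 1)) :=
  q.getVert_firstExit_succ_notMem (hG.notMem_cutSide hp (p.mk_getVert_mem_edges hi))

lemma firstCrossing_monotoneOn : MonotoneOn (p.firstCrossing q) (Set.Iio p.length) :=
  fun _ _ _ hj hij => q.firstExit_mono (hG.cutSide_mono hp hij hj)
    (hG.notMem_cutSide hp (p.mk_getVert_mem_edges hj))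

lemma firstCrossing_mem_offEdgeIndices (hi : i ∈ p.offEdgeIndices H) :
    p.firstCrossing q i ∈ q.offEdgeIndices G := by
  obtain ⟨hi, hiH⟩ := mem_filter.1 hi
  have hw := start_mem_cutSide (G := G) (w := w) s(p.getVert i, p.getVert (i + 1))
  have hw' := hG.notMem_cutSide hp (p.mk_getVert_mem_edges (mem_range.1 hi))
  refine mem_filter.2 ⟨mem_range.2 (q.firstExit_lt_length hw hw'), fun hjG => ?_⟩
  have hne : s(q.getVert (p.firstCrossing q i), q.getVert (p.firstCrossing q i + 1)) ≠
      s(p.getVert i, p.getVert (i + 1)) := fun h =>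
    hiH (h ▸ q.adj_getVert_succ (q.firstExit_lt_length hw hw'))
  exact p.getVert_firstCrossing_succ_notMem q hG hp (mem_range.1 hi)
    ((p.getVert_firstCrossing_mem q).trans (deleteEdges_adj.2 ⟨hjG, hne⟩).reachable)

end Walk

end SimpleGraph

open SimpleGraph

lemma onPath_iff_mem_edges {n : ℕ} {G : SimpleGraph (Fin n)} (hG : G.IsAcyclic)
    {u v a b : Fin n} {p : G.Walk u v} (hp : p.IsPath) : onPath G u v a b ↔ s(a, b) ∈ p.edges := by
  rw [onPath, hG.reachable_deleteEdges_iff hp, not_not, and_iff_right_of_imp p.adj_of_mem_edges]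

lemma forall_onPath_iff_of_offEdgeIndices_eq_empty {n : ℕ} {G H : SimpleGraph (Fin n)}
    (hG : G.IsAcyclic) (hH : H.IsAcyclic) {u v : Fin n} {p : G.Walk u v} (hp : p.IsPath)
    (hpH : p.offEdgeIndices H = ∅) (a b : Fin n) : onPath G u v a b ↔ onPath H u v a b := by
  have hpH := Walk.edges_subset_edgeSet_of_offEdgeIndices_eq_empty hpH
  rw [onPath_iff_mem_edges hG hp, onPath_iff_mem_edges hH (hp.transfer hpH), Walk.edges_transfer]

lemma onPath_getVert_of_mem_offEdgeIndices {n : ℕ} {G H : SimpleGraph (Fin n)}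
    (hG : G.IsAcyclic) {u v : Fin n} {p : G.Walk u v} (hp : p.IsPath) {i : ℕ}
    (hi : i ∈ p.offEdgeIndices H) :
    onPath G u v (p.getVert i) (p.getVert (i + 1)) ∧
      ¬ onPath H u v (p.getVert i) (p.getVert (i + 1)) := by
  obtain ⟨hi, hH⟩ := mem_filter.1 hi
  exact ⟨(onPath_iff_mem_edges hG hp).2 (p.mk_getVert_mem_edges (mem_range.1 hi)),
    fun h => hH h.1⟩

lemma onPath_firstCrossing {n : ℕ} {G H : SimpleGraph (Fin n)} (hG : G.IsAcyclic)
    {w w' : Fin n} {p : G.Walk w w'} (hp : p.IsPath) (q : H.Walk w w') {i : ℕ} (hi : i < p.length) :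
    onPath G (q.getVert (p.firstCrossing q i)) (q.getVert (p.firstCrossing q i + 1))
      (p.getVert i) (p.getVert (i + 1)) :=
  ⟨p.adj_getVert_succ hi, fun h => p.getVert_firstCrossing_succ_notMem q hG hp hi
    ((p.getVert_firstCrossing_mem q).trans h)⟩

/-- Two trees lemma.
Let `T` and `T̂` be two spanning trees on the same vertex set and `w, w̃` vertices such
that the `w–w̃` paths in `T` and `T̂` differ. Then there exist edges
`f = (u,ũ) ∈ path_T(w,w̃)` and `g = (v,ṽ) ∈ path_{T̂}(w,w̃)` with
(i) `f ∉ path_{T̂}(w,w̃)` and `g ∉ path_T(w,w̃)`;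
(ii) `f ∈ path_T(v,ṽ)` and `g ∈ path_{T̂}(u,ũ)`. -/
theorem two_trees_lemma
    (p : ℕ) (G G' : SimpleGraph (Fin p)) (hG : G.IsTree) (hG' : G'.IsTree)
    (w w' : Fin p)
    (hne : ¬ ∀ i j : Fin p, onPath G w w' i j ↔ onPath G' w w' i j) :
    ∃ u u' v v' : Fin p,
      onPath G w w' u u' ∧ onPath G' w w' v v' ∧
      ¬ onPath G' w w' u u' ∧ ¬ onPath G w w' v v' ∧
      onPath G v v' u u' ∧ onPath G' u u' v v' := by
  obtain ⟨P, hP, -⟩ := hG.existsUnique_path w w'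
  obtain ⟨Q, hQ, -⟩ := hG'.existsUnique_path w w'
  replace hG := hG.isAcyclic
  replace hG' := hG'.isAcyclic
  have hA : (P.offEdgeIndices G').Nonempty := nonempty_iff_ne_empty.2 fun hA =>
    hne (forall_onPath_iff_of_offEdgeIndices_eq_empty hG hG' hP hA)
  have hφ : Set.MapsTo (P.firstCrossing Q) (P.offEdgeIndices G') (Q.offEdgeIndices G) :=
    fun _ => P.firstCrossing_mem_offEdgeIndices Q hG hP
  have hψ : Set.MapsTo (Q.firstCrossing P) (Q.offEdgeIndices G) (P.offEdgeIndices G') :=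
    fun _ => Q.firstCrossing_mem_offEdgeIndices P hG' hQ
  obtain ⟨i, hi, hfix⟩ := exists_isFixedPt_of_mapsTo_of_monotoneOn hA (hψ.comp hφ)
    (((Q.firstCrossing_monotoneOn P hG' hQ).mono Q.coe_offEdgeIndices_subset).comp
      ((P.firstCrossing_monotoneOn Q hG hP).mono P.coe_offEdgeIndices_subset) hφ)
  obtain ⟨hPi, hPi'⟩ := onPath_getVert_of_mem_offEdgeIndices hG hP hi
  obtain ⟨hQj, hQj'⟩ := onPath_getVert_of_mem_offEdgeIndices hG' hQ (hφ hi)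
  have hQP := onPath_firstCrossing hG' hQ P (Q.coe_offEdgeIndices_subset (hφ hi))
  rw [show Q.firstCrossing P (P.firstCrossing Q i) = i from hfix] at hQP
  exact ⟨_, _, _, _, hPi, hQj, hPi', hQj',
    onPath_firstCrossing hG hP Q (P.coe_offEdgeIndices_subset hi), hQP⟩
end

section
/- Let Y_1,…,Y_d be independent {-1,+1}-valued random variables with E[Y_j] = μ_j, and let (y^(i)_j)_{i=1..n} be n i.i.d. samples of the vector (Y_1,…,Y_d). Let μ̂_j = (1/n)∑_{i=1}^n y^(i)_j be the empirical mean of Y_j. Then for any γ > 0, P[ |∏_{j=1}^d μ̂_j − ∏_{j=1}^d μ_j| ≥ γ ] ≤ (8/γ)·exp(−γ²n/32). -/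
open Finset
open scoped Classical

namespace Stmt18

lemma exp_aux (a : ℝ) : Real.exp a * (1 - a) ≤ 1 := by
  have h2 : (-a) + 1 ≤ Real.exp (-a) := Real.add_one_le_exp (-a)
  have h3 : Real.exp a * Real.exp (-a) = 1 := by rw [← Real.exp_add]; simp
  nlinarith [Real.exp_pos a]

lemma exp_quad (a : ℝ) : Real.exp a ≤ 1 + a + a ^ 2 * Real.exp |a| := by
  have h4 := exp_aux a
  have hpos := Real.exp_pos a
  rcases le_or_gt a 0 with h | h
  · have habs : |a| = -a := abs_of_nonpos h
    have hcube : a^3 ≤ 0 := by nlinarith [sq_nonneg a]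
    have h5 : Real.exp a ≤ 1 + a + a ^ 2 := by nlinarith
    have h6 : (1:ℝ) ≤ Real.exp |a| := Real.one_le_exp (abs_nonneg a)
    nlinarith [sq_nonneg a]
  · have habs : |a| = a := abs_of_pos h
    rw [habs]
    rcases le_or_gt 1 a with h1 | h1
    · nlinarith
    · have := mul_le_mul_of_nonneg_right h4 (by linarith : (0:ℝ) ≤ 1 + a)
      nlinarith


lemma bool_mgf (p q x : ℝ) (hp : 0 ≤ p) (hq : 0 ≤ q) (hpq : p + q = 1) :
    p * Real.exp (x * (1 - (p - q))) + q * Real.exp (x * (-1 - (p - q)))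
      ≤ Real.exp ((1 - (p - q)^2) * x^2 * Real.exp (2*|x|)) := by
  set μ := p - q with hμ
  have hμ1 : -1 ≤ μ := by rw [hμ]; linarith
  have hμ2 : μ ≤ 1 := by rw [hμ]; linarith
  set E := Real.exp (2*|x|) with hE
  have e1 : Real.exp (x * (1 - μ)) ≤ 1 + x*(1-μ) + (x*(1-μ))^2 * E := by
    refine (exp_quad _).trans ?_
    gcongr
    rw [abs_mul, abs_of_nonneg (by linarith : (0:ℝ) ≤ 1-μ), hE]
    apply Real.exp_le_exp.mpr
    nlinarith [abs_nonneg x]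
  have e2 : Real.exp (x * (-1 - μ)) ≤ 1 + x*(-1-μ) + (x*(-1-μ))^2 * E := by
    refine (exp_quad _).trans ?_
    gcongr
    rw [abs_mul, abs_of_nonpos (by linarith : -1-μ ≤ (0:ℝ)), hE]
    apply Real.exp_le_exp.mpr
    nlinarith [abs_nonneg x]
  have key : p * (1 + x*(1-μ) + (x*(1-μ))^2 * E) + q * (1 + x*(-1-μ) + (x*(-1-μ))^2 * E)
      = 1 + (1 - μ^2) * x^2 * E := by
    have hp' : p = (1+μ)/2 := by rw [hμ]; linarith
    have hq' : q = (1-μ)/2 := by rw [hμ]; linarith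
    rw [hp', hq']; ring
  have hsum : p * Real.exp (x * (1 - μ)) + q * Real.exp (x * (-1 - μ))
      ≤ 1 + (1 - μ^2) * x^2 * E := by
    rw [← key]
    exact add_le_add (mul_le_mul_of_nonneg_left e1 hp) (mul_le_mul_of_nonneg_left e2 hq)
  refine hsum.trans ?_
  linarith [Real.add_one_le_exp ((1 - μ^2) * x^2 * E)]

lemma sum_prod_fn (n : ℕ) (g : Bool → ℝ) :
    ∑ v : Fin n → Bool, ∏ i, g (v i) = (∑ b, g b) ^ n := by
  have h := Finset.prod_univ_sum (fun _ : Fin n => (univ : Finset Bool)) (fun _ b => g b)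
  rw [Fintype.piFinset_univ] at h
  rw [← h]
  simp [Finset.prod_const]


lemma abs_spin (b : Bool) : |spin b| = 1 := by cases b <;> simp [spin]

lemma abs_em_le (n : ℕ) (v : Fin n → Bool) : |(1/(n:ℝ)) * ∑ i, spin (v i)| ≤ 1 := by
  have h1 : |∑ i, spin (v i)| ≤ (n:ℝ) := by
    calc |∑ i, spin (v i)| ≤ ∑ i, |spin (v i)| := Finset.abs_sum_le_sum_abs _ _
      _ = ∑ _i : Fin n, (1:ℝ) := by simp [abs_spin]
      _ = n := by simp
  rcases Nat.eq_zero_or_pos n with h | h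
  · subst h; simp
  · have hn : (0:ℝ) < n := by exact_mod_cast h
    rw [abs_mul, abs_of_nonneg (by positivity : (0:ℝ) ≤ 1/(n:ℝ))]
    calc 1/(n:ℝ) * |∑ i, spin (v i)| ≤ 1/(n:ℝ) * n := by
          exact mul_le_mul_of_nonneg_left h1 (by positivity)
      _ = 1 := by field_simp

lemma wt_nonneg (n : ℕ) (qj : Bool → ℝ) (h0 : ∀ b, 0 ≤ qj b) (v : Fin n → Bool) :
    0 ≤ ∏ i, qj (v i) :=
  Finset.prod_nonneg fun i _ => h0 (v i)

lemma sum_wt (n : ℕ) (qj : Bool → ℝ) (h1 : qj true + qj false = 1) :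
    ∑ v : Fin n → Bool, ∏ i, qj (v i) = 1 := by
  rw [sum_prod_fn, Fintype.sum_bool, h1, one_pow]

lemma abs_mu_le (qj : Bool → ℝ) (h0 : ∀ b, 0 ≤ qj b) (h1 : qj true + qj false = 1) :
    |qj true - qj false| ≤ 1 := by
  rw [abs_le]; constructor <;> nlinarith [h0 true, h0 false]

lemma col_mgf (n : ℕ) (hn : 0 < n) (qj : Bool → ℝ) (h0 : ∀ b, 0 ≤ qj b)
    (h1 : qj true + qj false = 1) (s : ℝ) :
    ∑ v : Fin n → Bool, (∏ i, qj (v i)) *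
        Real.exp (s * ((1/(n:ℝ)) * ∑ i, spin (v i) - (qj true - qj false)))
      ≤ Real.exp (s^2 * (1 - (qj true - qj false)^2) * Real.exp (2*|s|/n) / n) := by
  set μ := qj true - qj false with hμ
  have hn' : (0:ℝ) < n := by exact_mod_cast hn
  have step1 : ∀ v : Fin n → Bool,
      (∏ i, qj (v i)) * Real.exp (s * ((1/(n:ℝ)) * ∑ i, spin (v i) - μ))
      = ∏ i, (qj (v i) * Real.exp ((s/n) * (spin (v i) - μ))) := by
    intro v
    rw [Finset.prod_mul_distrib, ← Real.exp_sum]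
    congr 2
    rw [← Finset.mul_sum, Finset.sum_sub_distrib, Finset.sum_const, Finset.card_univ,
      Fintype.card_fin]
    field_simp
    try ring
  simp_rw [step1]
  rw [sum_prod_fn n (fun b => qj b * Real.exp ((s/(n:ℝ)) * (spin b - μ)))]
  have base : ∑ b, (qj b * Real.exp ((s/n) * (spin b - μ)))
      ≤ Real.exp ((1 - μ^2) * (s/n)^2 * Real.exp (2*|s/(n:ℝ)|)) := by
    rw [Fintype.sum_bool]
    have := bool_mgf (qj true) (qj false) (s/n) (h0 true) (h0 false) h1
    simpa [spin, hμ] using this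
  have hbase0 : 0 ≤ ∑ b, (qj b * Real.exp ((s/n) * (spin b - μ))) := by
    apply Finset.sum_nonneg
    intro b _
    exact mul_nonneg (h0 b) (Real.exp_pos _).le
  calc (∑ b, (qj b * Real.exp ((s/n) * (spin b - μ)))) ^ n
      ≤ (Real.exp ((1 - μ^2) * (s/n)^2 * Real.exp (2*|s/(n:ℝ)|))) ^ n := by
        exact pow_le_pow_left₀ hbase0 base n
    _ = Real.exp ((n:ℝ) * ((1 - μ^2) * (s/n)^2 * Real.exp (2*|s/(n:ℝ)|))) := by
        rw [← Real.exp_nat_mul]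
    _ = Real.exp (s^2 * (1 - μ^2) * Real.exp (2*|s|/n) / n) := by
        congr 1
        rw [abs_div, abs_of_pos hn']
        field_simp


section Zspace

variable {d : ℕ} (n : ℕ) (q : Fin d → Bool → ℝ)

noncomputable def wt (qj : Bool → ℝ) (v : Fin n → Bool) : ℝ := ∏ i, qj (v i)

noncomputable def W (z : Fin d → Fin n → Bool) : ℝ := ∏ j, wt n (q j) (z j)

noncomputable def em (v : Fin n → Bool) : ℝ := (1/(n:ℝ)) * ∑ i, spin (v i)

noncomputable def mu (j : Fin d) : ℝ := q j true - q j false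

lemma W_nonneg (h0 : ∀ j b, 0 ≤ q j b) (z : Fin d → Fin n → Bool) : 0 ≤ W n q z :=
  Finset.prod_nonneg fun j _ => wt_nonneg n (q j) (h0 j) (z j)

lemma sum_W (h1 : ∀ j, q j true + q j false = 1) :
    ∑ z : Fin d → Fin n → Bool, W n q z = 1 := by
  unfold W
  have h := Finset.prod_univ_sum (fun _ : Fin d => (univ : Finset (Fin n → Bool)))
    (fun j v => wt n (q j) v)
  rw [Fintype.piFinset_univ] at h
  rw [← h]
  exact Finset.prod_eq_one fun j _ => sum_wt n (q j) (h1 j)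

lemma key_update (j : Fin d) (z : Fin d → Fin n → Bool) (v : Fin n → Bool) :
    wt n (q j) (z j) * W n q (Function.update z j v) = wt n (q j) v * W n q z := by
  unfold W
  rw [← Finset.mul_prod_erase univ (fun l => wt n (q l) (Function.update z j v l))
    (Finset.mem_univ j)]
  rw [← Finset.mul_prod_erase univ (fun l => wt n (q l) (z l)) (Finset.mem_univ j)]
  have hprod : ∏ l ∈ univ.erase j, wt n (q l) (Function.update z j v l)
      = ∏ l ∈ univ.erase j, wt n (q l) (z l) :=
    Finset.prod_congr rfl fun l hl => by
      rw [Function.update_of_ne (Finset.ne_of_mem_erase hl)]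
  rw [hprod, Function.update_self]
  ring

lemma fubini (S : Finset (Fin d)) (j : Fin d) (hj : j ∉ S)
    (h1 : ∀ j, q j true + q j false = 1) (K : (Fin n → Bool) → ℝ → ℝ) :
    ∑ z : Fin d → Fin n → Bool, W n q z * K (z j) (∏ l ∈ S, em n (z l))
      = ∑ v : Fin n → Bool, wt n (q j) v *
          ∑ z : Fin d → Fin n → Bool, W n q z * K v (∏ l ∈ S, em n (z l)) := by
  classical
  set A : (Fin d → Fin n → Bool) × (Fin n → Bool) → ℝ :=
    fun p => wt n (q j) p.2 * (W n q p.1 * K (p.1 j) (∏ l ∈ S, em n (p.1 l))) with hA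
  set e : (Fin d → Fin n → Bool) × (Fin n → Bool) → (Fin d → Fin n → Bool) × (Fin n → Bool) :=
    fun p => (Function.update p.1 j p.2, p.1 j) with he
  have hinv : Function.Involutive e := by
    intro p
    simp only [he]
    ext l <;> simp [Function.update_idem, Function.update_eq_self, Function.update_self]
  have hPupd : ∀ (z : Fin d → Fin n → Bool) (v : Fin n → Bool),
      ∏ l ∈ S, em n (Function.update z j v l) = ∏ l ∈ S, em n (z l) :=
    fun z v => Finset.prod_congr rfl fun l hl => by
      rw [Function.update_of_ne (by rintro rfl; exact hj hl)]
  have step1 : ∑ z : Fin d → Fin n → Bool, W n q z * K (z j) (∏ l ∈ S, em n (z l))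
      = ∑ p : (Fin d → Fin n → Bool) × (Fin n → Bool), A p := by
    have hw1 : ∑ v : Fin n → Bool, wt n (q j) v = 1 := sum_wt n (q j) (h1 j)
    rw [Fintype.sum_prod_type]
    apply Finset.sum_congr rfl
    intro z _
    simp only [hA]
    rw [← Finset.sum_mul, hw1, one_mul]
  have step2 : ∑ p : (Fin d → Fin n → Bool) × (Fin n → Bool), A p
      = ∑ p : (Fin d → Fin n → Bool) × (Fin n → Bool), A (e p) :=
    (Fintype.sum_bijective e hinv.bijective _ A fun x => rfl).symm
  have step3 : ∀ p : (Fin d → Fin n → Bool) × (Fin n → Bool),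
      A (e p) = wt n (q j) p.2 * (W n q p.1 * K p.2 (∏ l ∈ S, em n (p.1 l))) := by
    intro p
    simp only [hA, he, Function.update_self]
    rw [hPupd]
    rw [← mul_assoc, key_update n q j p.1 p.2, mul_assoc]
  rw [step1, step2]
  rw [Finset.sum_congr rfl fun p _ => step3 p]
  rw [Fintype.sum_prod_type_right]
  apply Finset.sum_congr rfl
  intro v _
  rw [Finset.mul_sum]


lemma col_mgf' (hn : 0 < n) (hq0 : ∀ j b, 0 ≤ q j b) (hq1 : ∀ j, q j true + q j false = 1)
    (j : Fin d) (s : ℝ) :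
    ∑ v : Fin n → Bool, wt n (q j) v * Real.exp (s * (em n v - mu q j))
      ≤ Real.exp (s^2 * (1 - (mu q j)^2) * Real.exp (2*|s|/n) / n) :=
  col_mgf n hn (q j) (hq0 j) (hq1 j) s

lemma abs_em_le' (v : Fin n → Bool) : |em n v| ≤ 1 := abs_em_le n v

lemma abs_mu_le' (hq0 : ∀ j b, 0 ≤ q j b) (hq1 : ∀ j, q j true + q j false = 1) (j : Fin d) :
    |mu q j| ≤ 1 := abs_mu_le (q j) (hq0 j) (hq1 j)

lemma mgf (hn : 0 < n) (hq0 : ∀ j b, 0 ≤ q j b) (hq1 : ∀ j, q j true + q j false = 1)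
    (S : Finset (Fin d)) :
    ∀ t : ℝ, ∑ z : Fin d → Fin n → Bool, W n q z *
        Real.exp (t * (∏ l ∈ S, em n (z l) - ∏ l ∈ S, mu q l))
      ≤ Real.exp (t^2 * Real.exp (2*|t|/(n:ℝ)) * (1 - ∏ l ∈ S, (mu q l)^2) / n) := by
  induction S using Finset.induction_on with
  | empty =>
    intro t
    simp only [Finset.prod_empty, sub_self, mul_zero, Real.exp_zero, mul_one]
    rw [sum_W n q hq1]
    simp
  | @insert a S haS ih =>
    intro t
    have hn' : (0:ℝ) < n := by exact_mod_cast hn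
    simp only [Finset.prod_insert haS]
    set B := ∏ l ∈ S, mu q l with hB
    set B2 := ∏ l ∈ S, (mu q l)^2 with hB2
    set m := mu q a with hm
    set E := Real.exp (2*|t|/(n:ℝ)) with hE
    have hB2eq : B2 = B^2 := by rw [hB2, hB, Finset.prod_pow]
    have hE1 : (1:ℝ) ≤ E := by rw [hE]; exact Real.one_le_exp (by positivity)
    have habsB : |B| ≤ 1 := by
      rw [hB, Finset.abs_prod]
      exact Finset.prod_le_one (fun l _ => abs_nonneg _)
        (fun l _ => abs_mu_le' q hq0 hq1 l)
    have hB2nonneg : 0 ≤ B2 := by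
      rw [hB2eq]; positivity
    have hB2le1 : B2 ≤ 1 := by
      rw [hB2eq]
      nlinarith [habsB, neg_abs_le B, le_abs_self B, abs_nonneg B]
    have habsm : |m| ≤ 1 := abs_mu_le' q hq0 hq1 a
    have hm2le1 : m^2 ≤ 1 := by
      nlinarith [habsm, neg_abs_le m, le_abs_self m, abs_nonneg m]
    set C := Real.exp (t^2 * E * (1 - B2)/(n:ℝ)) with hC
    have hK : ∀ z : Fin d → Fin n → Bool,
        Real.exp (t * (em n (z a) * (∏ l ∈ S, em n (z l)) - m * B))
        = Real.exp ((t*B) * (em n (z a) - m)) *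
            Real.exp ((t * em n (z a)) * ((∏ l ∈ S, em n (z l)) - B)) := by
      intro z
      rw [← Real.exp_add]
      congr 1
      ring
    have inner_le : ∀ v : Fin n → Bool,
        ∑ z : Fin d → Fin n → Bool, W n q z * (Real.exp ((t*B) * (em n v - m)) *
            Real.exp ((t * em n v) * ((∏ l ∈ S, em n (z l)) - B)))
        ≤ Real.exp ((t*B) * (em n v - m)) * C := by
      intro v
      have hrw : ∑ z : Fin d → Fin n → Bool, W n q z * (Real.exp ((t*B) * (em n v - m)) *
            Real.exp ((t * em n v) * ((∏ l ∈ S, em n (z l)) - B)))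
          = Real.exp ((t*B) * (em n v - m)) * ∑ z : Fin d → Fin n → Bool, W n q z *
            Real.exp ((t * em n v) * ((∏ l ∈ S, em n (z l)) - B)) := by
        rw [Finset.mul_sum]
        exact Finset.sum_congr rfl fun z _ => by ring
      rw [hrw]
      apply mul_le_mul_of_nonneg_left _ (Real.exp_pos _).le
      refine (ih (t * em n v)).trans ?_
      apply Real.exp_le_exp.mpr
      have hem2 : (em n v)^2 ≤ 1 := by
        nlinarith [abs_em_le' n v, abs_nonneg (em n v), sq_abs (em n v)]
      have h1 : (t * em n v)^2 ≤ t^2 := by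
        nlinarith [hem2, sq_nonneg t]
      have h2 : Real.exp (2*|t * em n v|/(n:ℝ)) ≤ E := by
        rw [hE]
        apply Real.exp_le_exp.mpr
        have habs : |t * em n v| ≤ |t| := by
          rw [abs_mul]
          nlinarith [abs_em_le' n v, abs_nonneg t, abs_nonneg (em n v)]
        gcongr
      have h3 : (0:ℝ) ≤ 1 - B2 := by linarith
      have hXY : (t * em n v)^2 * Real.exp (2*|t * em n v|/(n:ℝ)) ≤ t^2 * E :=
        mul_le_mul h1 h2 (Real.exp_pos _).le (sq_nonneg t)
      have h8 := mul_le_mul_of_nonneg_right hXY h3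
      rw [div_eq_mul_inv, div_eq_mul_inv]
      exact mul_le_mul_of_nonneg_right h8 (by positivity)
    calc ∑ z : Fin d → Fin n → Bool, W n q z *
          Real.exp (t * (em n (z a) * (∏ l ∈ S, em n (z l)) - m * B))
        = ∑ v : Fin n → Bool, wt n (q a) v * ∑ z : Fin d → Fin n → Bool, W n q z *
            (Real.exp ((t*B) * (em n v - m)) *
              Real.exp ((t * em n v) * ((∏ l ∈ S, em n (z l)) - B))) := by
          simp_rw [hK]
          exact fubini n q S a haS hq1
            (fun v x => Real.exp ((t*B) * (em n v - m)) *
              Real.exp ((t * em n v) * (x - B)))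
      _ ≤ ∑ v : Fin n → Bool, wt n (q a) v * (Real.exp ((t*B) * (em n v - m)) * C) :=
          Finset.sum_le_sum fun v _ =>
            mul_le_mul_of_nonneg_left (inner_le v) (wt_nonneg n (q a) (hq0 a) v)
      _ = C * ∑ v : Fin n → Bool, wt n (q a) v * Real.exp ((t*B) * (em n v - m)) := by
          rw [Finset.mul_sum]
          exact Finset.sum_congr rfl fun v _ => by ring
      _ ≤ C * Real.exp ((t*B)^2 * (1 - m^2) * Real.exp (2*|t*B|/(n:ℝ)) / (n:ℝ)) := by
          apply mul_le_mul_of_nonneg_left _ (Real.exp_pos _).le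
          exact col_mgf' n q hn hq0 hq1 a (t*B)
      _ ≤ C * Real.exp (t^2 * B2 * (1 - m^2) * E / (n:ℝ)) := by
          apply mul_le_mul_of_nonneg_left _ (Real.exp_pos _).le
          apply Real.exp_le_exp.mpr
          have h4 : Real.exp (2*|t*B|/(n:ℝ)) ≤ E := by
            rw [hE]
            apply Real.exp_le_exp.mpr
            have habs : |t * B| ≤ |t| := by
              rw [abs_mul]
              nlinarith [abs_nonneg t, abs_nonneg B]
            gcongr
          have h5 : (0:ℝ) ≤ 1 - m^2 := by linarith
          have h6 : (t*B)^2 = t^2 * B2 := by rw [hB2eq]; ring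
          have h7 : (0:ℝ) ≤ t^2 * B2 * (1 - m^2) :=
            mul_nonneg (mul_nonneg (sq_nonneg t) hB2nonneg) h5
          have h8 : t^2 * B2 * (1 - m^2) * Real.exp (2*|t*B|/(n:ℝ))
              ≤ t^2 * B2 * (1 - m^2) * E := mul_le_mul_of_nonneg_left h4 h7
          rw [h6, div_eq_mul_inv, div_eq_mul_inv]
          exact mul_le_mul_of_nonneg_right h8 (by positivity)
      _ = Real.exp (t^2 * E * (1 - m^2 * B2) / (n:ℝ)) := by
          rw [hC, ← Real.exp_add]
          congr 1
          ring

lemma indicator_le (w x M γ t : ℝ) (hw : 0 ≤ w) (ht : 0 ≤ t) :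
    (if γ ≤ |x - M| then w else 0)
      ≤ Real.exp (-(t*γ)) * (w * Real.exp (t*(x-M)) + w * Real.exp ((-t)*(x-M))) := by
  split_ifs with h
  · have key : Real.exp (t*γ) ≤ Real.exp (t*(x-M)) + Real.exp ((-t)*(x-M)) := by
      rcases abs_cases (x - M) with ⟨he, _⟩ | ⟨he, _⟩
      · have h2 : t*γ ≤ t*(x-M) := mul_le_mul_of_nonneg_left (he ▸ h) ht
        calc Real.exp (t*γ) ≤ Real.exp (t*(x-M)) := Real.exp_le_exp.mpr h2
          _ ≤ _ := le_add_of_nonneg_right (Real.exp_pos _).le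
      · have h2 : t*γ ≤ (-t)*(x-M) := by
          have h3 : γ ≤ -(x-M) := he ▸ h
          nlinarith
        calc Real.exp (t*γ) ≤ Real.exp ((-t)*(x-M)) := Real.exp_le_exp.mpr h2
          _ ≤ _ := le_add_of_nonneg_left (Real.exp_pos _).le
    have h3 : w * Real.exp (t*γ) ≤ w * (Real.exp (t*(x-M)) + Real.exp ((-t)*(x-M))) :=
      mul_le_mul_of_nonneg_left key hw
    have h5 := mul_le_mul_of_nonneg_left h3 (Real.exp_pos (-(t*γ))).le
    have h4 : Real.exp (-(t*γ)) * Real.exp (t*γ) = 1 := by rw [← Real.exp_add]; simp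
    nlinarith [h5, h4, hw]
  · positivity

lemma exp_half_lt_two : Real.exp (2⁻¹ : ℝ) < 2 := by
  nlinarith [Real.exp_one_lt_d9, Real.exp_pos (2⁻¹ : ℝ),
    Real.exp_add (2⁻¹ : ℝ) (2⁻¹ : ℝ), Real.exp_nonneg (2⁻¹ : ℝ)]

end Zspace

end Stmt18

/-- Concentration of products of empirical means.
Let `Y_1,…,Y_d` be independent `{-1,+1}`-valued random variables with laws
`q_j` and means `μ_j`, and draw `n` i.i.d. samples of the vector `(Y_1,…,Y_d)`. Then for
any `γ > 0`, the probability that `|∏_j μ̂_j − ∏_j μ_j| ≥ γ` is at most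
`(8/γ)·exp(−γ²n/32)`. -/
theorem product_of_empirical_means_concentration
    (d n : ℕ) (γ : ℝ) (hγ : 0 < γ) (q : Fin d → Bool → ℝ)
    (hq : ∀ j, (∀ b, 0 ≤ q j b) ∧ q j true + q j false = 1) :
    (∑ ys : Fin n → Fin d → Bool,
      if γ ≤ |(∏ j : Fin d, (1/(n:ℝ)) * ∑ i : Fin n, spin (ys i j))
              - ∏ j : Fin d, ∑ b : Bool, q j b * spin b|
      then ∏ i : Fin n, ∏ j : Fin d, q j (ys i j) else 0)
      ≤ (8/γ) * Real.exp (-(γ^2 * n)/32) := by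
  classical
  have hq0 : ∀ j b, 0 ≤ q j b := fun j => (hq j).1
  have hq1 : ∀ j, q j true + q j false = 1 := fun j => (hq j).2
  have hMeq : (∏ j : Fin d, ∑ b : Bool, q j b * spin b) = ∏ j, Stmt18.mu q j := by
    refine Finset.prod_congr rfl fun j _ => ?_
    rw [Fintype.sum_bool]
    simp [spin, Stmt18.mu]
    ring
  rw [hMeq]
  set M : ℝ := ∏ j, Stmt18.mu q j with hM
  have habsM : |M| ≤ 1 := by
    rw [hM, Finset.abs_prod]
    exact Finset.prod_le_one (fun l _ => abs_nonneg _)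
      (fun l _ => Stmt18.abs_mu_le' q hq0 hq1 l)
  by_cases hγ2 : γ ≤ 2
  · -- main regime
    rcases Nat.eq_zero_or_pos n with hn0 | hn
    · -- n = 0 : bound by total mass 1
      have hle1 : (∑ ys : Fin n → Fin d → Bool,
          if γ ≤ |(∏ j : Fin d, (1/(n:ℝ)) * ∑ i : Fin n, spin (ys i j)) - M|
          then ∏ i : Fin n, ∏ j : Fin d, q j (ys i j) else 0) ≤ 1 := by
        subst hn0
        calc (∑ ys : Fin 0 → Fin d → Bool, if γ ≤ |(∏ j : Fin d, (1/((0:ℕ):ℝ)) *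
              ∑ i : Fin 0, spin (ys i j)) - M|
              then ∏ i : Fin 0, ∏ j : Fin d, q j (ys i j) else 0)
            ≤ ∑ ys : Fin 0 → Fin d → Bool, ∏ i : Fin 0, ∏ j : Fin d, q j (ys i j) := by
              refine Finset.sum_le_sum fun ys _ => ?_
              split_ifs
              · exact le_refl _
              · exact Finset.prod_nonneg fun i _ => Finset.prod_nonneg fun j _ => hq0 j _
          _ = ∑ _ys : Fin 0 → Fin d → Bool, (1:ℝ) := by
              refine Finset.sum_congr rfl fun ys _ => ?_
              simp
          _ = 1 := by
              rw [Finset.sum_const, Finset.card_univ]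
              simp
      refine hle1.trans ?_
      subst hn0
      have h1 : Real.exp (-(γ^2 * ((0:ℕ):ℝ))/32) = 1 := by norm_num
      rw [h1, mul_one, le_div_iff₀ hγ]
      linarith
    · -- n ≥ 1
      have hu : (0:ℝ) < n := by exact_mod_cast hn
      have hswap : (∑ ys : Fin n → Fin d → Bool,
          if γ ≤ |(∏ j : Fin d, (1/(n:ℝ)) * ∑ i : Fin n, spin (ys i j)) - M|
          then ∏ i : Fin n, ∏ j : Fin d, q j (ys i j) else 0)
          = ∑ z : Fin d → Fin n → Bool,
            (if γ ≤ |(∏ j, Stmt18.em n (z j)) - M| then Stmt18.W n q z else 0) := by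
        refine Fintype.sum_bijective (fun (ys : Fin n → Fin d → Bool) => fun j i => ys i j)
          ⟨fun a b h => funext fun i => funext fun j => congrFun (congrFun h j) i,
           fun z => ⟨fun i j => z j i, rfl⟩⟩ _ _ fun ys => ?_
        have hw : (∏ i : Fin n, ∏ j : Fin d, q j (ys i j))
            = Stmt18.W n q (fun j i => ys i j) := by
          rw [Finset.prod_comm]
          rfl
        rw [hw]
        rfl
      rw [hswap]
      set t := γ * (n:ℝ) / 8 with htdef
      have ht : 0 ≤ t := by positivity
      have habs_t : |t| = t := abs_of_nonneg ht
      have hP2le : (∏ l, (Stmt18.mu q l)^2) ≤ 1 :=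
        Finset.prod_le_one (fun l _ => sq_nonneg _) (fun l _ => by
          nlinarith [Stmt18.abs_mu_le' q hq0 hq1 l, abs_nonneg (Stmt18.mu q l),
            neg_abs_le (Stmt18.mu q l), le_abs_self (Stmt18.mu q l)])
      set D := Real.exp (t^2 * Real.exp (2*t/(n:ℝ)) / (n:ℝ)) with hD
      have hmgf : ∀ s : ℝ, |s| = t → (∑ z : Fin d → Fin n → Bool, Stmt18.W n q z *
          Real.exp (s * ((∏ j, Stmt18.em n (z j)) - M))) ≤ D := by
        intro s hs
        refine (Stmt18.mgf n q hn hq0 hq1 Finset.univ s).trans ?_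
        rw [hD]
        apply Real.exp_le_exp.mpr
        rw [hs]
        have hc : (0:ℝ) ≤ s^2 * Real.exp (2*t/(n:ℝ)) := by positivity
        have hs2 : s^2 = t^2 := by
          rw [← sq_abs s, hs]
        rw [hs2]
        have hP2nonneg : (0:ℝ) ≤ ∏ l, (Stmt18.mu q l)^2 :=
          Finset.prod_nonneg fun l _ => sq_nonneg _
        calc t^2 * Real.exp (2*t/(n:ℝ)) * (1 - ∏ l, (Stmt18.mu q l)^2)/(n:ℝ)
            ≤ t^2 * Real.exp (2*t/(n:ℝ)) * 1/(n:ℝ) := by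
              gcongr
              linarith
          _ = t^2 * Real.exp (2*t/(n:ℝ))/(n:ℝ) := by ring
      have hWnn : ∀ z : Fin d → Fin n → Bool, 0 ≤ Stmt18.W n q z :=
        Stmt18.W_nonneg n q hq0
      have hhalf : 2*t/(n:ℝ) = γ/4 := by rw [htdef]; field_simp; ring
      have hE2 : Real.exp (2*t/(n:ℝ)) ≤ 2 := by
        calc Real.exp (2*t/(n:ℝ)) ≤ Real.exp (2⁻¹:ℝ) := by
              apply Real.exp_le_exp.mpr
              rw [hhalf]; linarith
          _ ≤ 2 := Stmt18.exp_half_lt_two.le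
      have hfinal : Real.exp (-(t*γ)) * D ≤ Real.exp (-(γ^2*(n:ℝ))/32) := by
        rw [hD, ← Real.exp_add]
        apply Real.exp_le_exp.mpr
        have h1 : t^2 * Real.exp (2*t/(n:ℝ))/(n:ℝ) ≤ t^2 * 2/(n:ℝ) := by
          rw [div_eq_mul_inv, div_eq_mul_inv]
          exact mul_le_mul_of_nonneg_right
            (mul_le_mul_of_nonneg_left hE2 (sq_nonneg t)) (by positivity)
        have h2 : t^2 * 2/(n:ℝ) = γ^2*(n:ℝ)/32 := by rw [htdef]; field_simp; ring
        have h3 : t*γ = γ^2*(n:ℝ)/8 := by rw [htdef]; ring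
        have h4 : 0 ≤ γ^2*(n:ℝ) := by positivity
        rw [h2] at h1
        linarith
      calc (∑ z : Fin d → Fin n → Bool,
            if γ ≤ |(∏ j, Stmt18.em n (z j)) - M| then Stmt18.W n q z else 0)
          ≤ ∑ z : Fin d → Fin n → Bool, Real.exp (-(t*γ)) *
              (Stmt18.W n q z * Real.exp (t*((∏ j, Stmt18.em n (z j)) - M)) +
                Stmt18.W n q z * Real.exp ((-t)*((∏ j, Stmt18.em n (z j)) - M))) :=
            Finset.sum_le_sum fun z _ =>
              Stmt18.indicator_le (Stmt18.W n q z) _ M γ t (hWnn z) ht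
        _ = Real.exp (-(t*γ)) *
              ((∑ z : Fin d → Fin n → Bool, Stmt18.W n q z *
                  Real.exp (t*((∏ j, Stmt18.em n (z j)) - M))) +
               (∑ z : Fin d → Fin n → Bool, Stmt18.W n q z *
                  Real.exp ((-t)*((∏ j, Stmt18.em n (z j)) - M)))) := by
            rw [← Finset.mul_sum, Finset.sum_add_distrib]
        _ ≤ Real.exp (-(t*γ)) * (D + D) := by
            refine mul_le_mul_of_nonneg_left ?_ (Real.exp_pos _).le
            exact add_le_add (hmgf t habs_t) (hmgf (-t) (by rw [abs_neg, habs_t]))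
        _ = 2 * (Real.exp (-(t*γ)) * D) := by ring
        _ ≤ 2 * Real.exp (-(γ^2*(n:ℝ))/32) := by
            have := mul_le_mul_of_nonneg_left hfinal (by norm_num : (0:ℝ) ≤ 2)
            linarith
        _ ≤ (8/γ) * Real.exp (-(γ^2*(n:ℝ))/32) := by
            refine mul_le_mul_of_nonneg_right ?_ (Real.exp_pos _).le
            rw [le_div_iff₀ hγ]
            linarith
  · -- γ > 2 : indicator always false
    push_neg at hγ2
    have hzero : ∀ ys : Fin n → Fin d → Bool,
        (if γ ≤ |(∏ j : Fin d, (1/(n:ℝ)) * ∑ i : Fin n, spin (ys i j)) - M|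
          then ∏ i : Fin n, ∏ j : Fin d, q j (ys i j) else 0) = 0 := by
      intro ys
      refine if_neg ?_
      intro habs
      have h1 : |∏ j : Fin d, (1/(n:ℝ)) * ∑ i : Fin n, spin (ys i j)| ≤ 1 := by
        rw [Finset.abs_prod]
        exact Finset.prod_le_one (fun j _ => abs_nonneg _)
          (fun j _ => Stmt18.abs_em_le n (fun i => ys i j))
      have h2 : |(∏ j : Fin d, (1/(n:ℝ)) * ∑ i : Fin n, spin (ys i j)) - M|
          ≤ |∏ j : Fin d, (1/(n:ℝ)) * ∑ i : Fin n, spin (ys i j)| + |M| :=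
        abs_sub _ _
      linarith
    rw [Finset.sum_congr rfl fun ys _ => hzero ys, Finset.sum_const_zero]
    positivity
end
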